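/- arXiv:2110.10211 — 4 statements merged into one kernel-verified Lean document; each statement's English description precedes it below -/
import Mathlib

section
/- Let G be a locally compact Hausdorff topological group with a left Haar measure μ, S ⊆ G a measurable subset, w ∈ G, and ψ, f : G → ℝ measurable such that for every u ∈ G the function v ↦ ψ(v⁻¹u)·f(v) is μ-integrable. If S is invariant under left multiplication by w, i.e., w • S = S (equivalently, u ∈ S ⟺ w⁻¹u ∈ S for all u ∈ G), then the output-truncated group convolution is exactly w-equivariant: F_S(L_w f)(u) = L_w(F_S f)(u) for all u ∈ G. -/
open MeasureTheory Pointwise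

theorem Set.indicator_apply_eq_indicator_apply_of_mem_iff {α β M : Type*} [Zero M]
    {s : Set α} {t : Set β} {f : α → M} {g : β → M} {a : α} {b : β}
    (hmem : a ∈ s ↔ b ∈ t) (hfg : f a = g b) :
    s.indicator f a = t.indicator g b := by
  by_cases ha : a ∈ s
  · rw [indicator_of_mem ha, indicator_of_mem (hmem.mp ha), hfg]
  · rw [indicator_of_notMem ha, indicator_of_notMem (mt hmem.mpr ha)]

theorem integral_comp_inv_mul_translate {G E : Type*} [Group G] [MeasurableSpace G]
    [MeasurableMul G] [NormedAddCommGroup E] [NormedSpace ℝ E]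
    (μ : Measure G) [μ.IsMulLeftInvariant] (K : G → G → E) (w u : G) :
    ∫ v, K (v⁻¹ * u) (w⁻¹ * v) ∂μ = ∫ v, K (v⁻¹ * (w⁻¹ * u)) v ∂μ := by
  rw [← integral_mul_left_eq_self (fun v => K (v⁻¹ * (w⁻¹ * u)) v) w⁻¹]
  simp only [mul_inv_rev, inv_inv, mul_assoc, mul_inv_cancel_left]

theorem output_truncated_group_convolution_equivariant_of_invariant_subset_general
    {G : Type*} [Group G] [TopologicalSpace G] [IsTopologicalGroup G]
    [MeasurableSpace G] [BorelSpace G]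
    (μ : Measure G) [μ.IsHaarMeasure]
    (S : Set G)
    (w : G) (hSw : w • S = S)
    (ψ f : G → ℝ) :
    ∀ u : G,
      S.indicator (fun u' => ∫ v, ψ (v⁻¹ * u') * f (w⁻¹ * v) ∂μ) u
        = S.indicator (fun u' => ∫ v, ψ (v⁻¹ * u') * f v ∂μ) (w⁻¹ * u) := by
  intro u
  refine Set.indicator_apply_eq_indicator_apply_of_mem_iff ?_
    (integral_comp_inv_mul_translate μ (fun x y => ψ x * f y) w u)
  rw [← smul_eq_mul, ← Set.mem_smul_set_iff_inv_smul_mem, hSw]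

/-- If the output subset `S` is invariant under left multiplication by `w`, i.e.
`w • S = S`, then the output-truncated group convolution
`F_S(f)(u) = 1_S(u)·(ψ * f)(u)` is exactly `w`-equivariant:
`F_S(L_w f)(u) = L_w(F_S f)(u)` for all `u`. -/
theorem output_truncated_group_convolution_equivariant_of_invariant_subset
    {G : Type*} [Group G] [TopologicalSpace G] [IsTopologicalGroup G]
    [LocallyCompactSpace G] [T2Space G]
    [MeasurableSpace G] [BorelSpace G]
    (μ : Measure G) [μ.IsHaarMeasure]
    (S : Set G) (hS : MeasurableSet S)
    (w : G) (hSw : w • S = S)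
    (ψ f : G → ℝ) (hψ : Measurable ψ) (hf : Measurable f)
    (hint : ∀ u : G, Integrable (fun v => ψ (v⁻¹ * u) * f v) μ) :
    ∀ u : G,
      S.indicator (fun u' => ∫ v, ψ (v⁻¹ * u') * f (w⁻¹ * v) ∂μ) u
        = S.indicator (fun u' => ∫ v, ψ (v⁻¹ * u') * f v ∂μ) (w⁻¹ * u) :=
  output_truncated_group_convolution_equivariant_of_invariant_subset_general μ S w hSw ψ f
end

section
/- Let G be a locally compact Hausdorff topological group with a left Haar measure μ, S ⊆ G a measurable subset, w ∈ G, and ψ, f : G → ℝ measurable such that for every u ∈ G the function v ↦ 1_S(v)·ψ(v⁻¹u)·f(v) is μ-integrable. If the input subset S is invariant under left multiplication by w⁻¹, i.e., w⁻¹ • S = S, then the partial group convolution with input subset S is exactly w-equivariant: (ψ *_S L_w f)(u) = (ψ *_S f)(w⁻¹u) for all u ∈ G. -/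
open MeasureTheory Pointwise

theorem setIntegral_comp_mul_left_of_inv_smul_eq {G E : Type*} [Group G] [MeasurableSpace G]
    [MeasurableMul G] [NormedAddCommGroup E] [NormedSpace ℝ E] (μ : Measure G)
    [μ.IsMulLeftInvariant] {S : Set G} {w : G} (hSw : w⁻¹ • S = S) (g : G → E) :
    ∫ v in S, g (w * v) ∂μ = ∫ v in S, g v ∂μ := by
  have hpre : (w * ·) ⁻¹' S = S := (Set.preimage_smul w S).trans hSw
  calc ∫ v in S, g (w * v) ∂μ = ∫ v in (w * ·) ⁻¹' S, g (w * v) ∂μ := by rw [hpre]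
    _ = ∫ v in S, g v ∂μ :=
      (measurePreserving_mul_left μ w).setIntegral_preimage_emb (measurableEmbedding_mulLeft w) g S

theorem partial_group_convolution_equivariant_of_invariant_input_subset_general
    {G : Type*} [Group G] [TopologicalSpace G] [IsTopologicalGroup G]
    [MeasurableSpace G] [BorelSpace G]
    (μ : Measure G) [μ.IsHaarMeasure]
    (S : Set G)
    (w : G) (hSw : w⁻¹ • S = S)
    (ψ f : G → ℝ) :
    ∀ u : G,
      (∫ v in S, ψ (v⁻¹ * u) * f (w⁻¹ * v) ∂μ)
        = ∫ v in S, ψ (v⁻¹ * (w⁻¹ * u)) * f v ∂μ := by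
  intro u
  rw [← setIntegral_comp_mul_left_of_inv_smul_eq μ hSw]
  simp only [mul_inv_rev, inv_mul_cancel_left, mul_assoc]

/-- If the input subset `S` is invariant under left multiplication by `w⁻¹`, i.e.
`w⁻¹ • S = S`, then the partial group convolution with input subset `S` is exactly
`w`-equivariant: `(ψ *_S L_w f)(u) = (ψ *_S f)(w⁻¹u)` for all `u`. -/
theorem partial_group_convolution_equivariant_of_invariant_input_subset
    {G : Type*} [Group G] [TopologicalSpace G] [IsTopologicalGroup G]
    [LocallyCompactSpace G] [T2Space G]
    [MeasurableSpace G] [BorelSpace G]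
    (μ : Measure G) [μ.IsHaarMeasure]
    (S : Set G) (hS : MeasurableSet S)
    (w : G) (hSw : w⁻¹ • S = S)
    (ψ f : G → ℝ) (hψ : Measurable ψ) (hf : Measurable f)
    (hint : ∀ u : G, Integrable (S.indicator (fun v => ψ (v⁻¹ * u) * f v)) μ) :
    ∀ u : G,
      (∫ v in S, ψ (v⁻¹ * u) * f (w⁻¹ * v) ∂μ)
        = ∫ v in S, ψ (v⁻¹ * (w⁻¹ * u)) * f v ∂μ :=
  partial_group_convolution_equivariant_of_invariant_input_subset_general μ S w hSw ψ f
end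

section
/- Let G be a locally compact Hausdorff topological group with a left Haar measure μ, S ⊆ G a measurable subset, p : G → ℝ a function, w ∈ G, and ψ, f : G → ℝ measurable such that for every u ∈ G the function v ↦ 1_S(v)·ψ(v⁻¹u)·f(v) is μ-integrable. Define the p-weighted partial group convolution Φ(f)(u) = p(u)·∫_S ψ(v⁻¹u) f(v) dμ(v). If p is invariant under left translation by w, i.e., p(w⁻¹u) = p(u) for all u ∈ G, and the input subset satisfies w⁻¹ • S = S, then Φ is exactly w-equivariant: Φ(L_w f)(u) = Φ(f)(w⁻¹u) = L_w(Φ f)(u) for all u ∈ G. In particular, if p is constant on G and S = G, the operation is fully G-equivariant. -/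
/-! The substitution `v = w x` preserves the left Haar measure and carries `S` onto `w⁻¹ • S = S`,
so translating the input by `w` translates the unweighted convolution by `w`; the
`w`-invariance of `p` then handles the weight. -/

open MeasureTheory Pointwise

section LeftInvariant

variable {G : Type*} [Group G] [MeasurableSpace G] [MeasurableMul G]
  (μ : Measure G) [μ.IsMulLeftInvariant]

theorem setIntegral_comp_mul_left {E : Type*} [NormedAddCommGroup E] [NormedSpace ℝ E]
    (g : G → E) (w : G) (S : Set G) :
    ∫ x in w⁻¹ • S, g (w * x) ∂μ = ∫ y in S, g y ∂μ := by
  rw [← Set.preimage_smul]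
  exact (measurePreserving_mul_left μ w).setIntegral_preimage_emb
    (measurableEmbedding_mulLeft w) g S

noncomputable def partialConv (S : Set G) (ψ f : G → ℝ) (u : G) : ℝ :=
  ∫ v in S, ψ (v⁻¹ * u) * f v ∂μ

theorem partialConv_comp_mul_left {S : Set G} {w : G} (hSw : w⁻¹ • S = S) (ψ f : G → ℝ)
    (u : G) :
    partialConv μ S ψ (fun v => f (w⁻¹ * v)) u = partialConv μ S ψ f (w⁻¹ * u) := by
  calc partialConv μ S ψ (fun v => f (w⁻¹ * v)) u
      = ∫ x in w⁻¹ • S, ψ ((w * x)⁻¹ * u) * f (w⁻¹ * (w * x)) ∂μ :=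
        (setIntegral_comp_mul_left μ (fun v => ψ (v⁻¹ * u) * f (w⁻¹ * v)) w S).symm
    _ = partialConv μ S ψ f (w⁻¹ * u) := by
        simp only [hSw, mul_inv_rev, inv_mul_cancel_left, mul_assoc, partialConv]

end LeftInvariant

theorem weighted_partial_group_convolution_equivariant_general
    {G : Type*} [Group G] [TopologicalSpace G] [IsTopologicalGroup G]
    [MeasurableSpace G] [BorelSpace G]
    (μ : Measure G) [μ.IsHaarMeasure]
    (S : Set G)
    (p : G → ℝ) (w : G)
    (ψ f : G → ℝ)
    (hp : ∀ u : G, p (w⁻¹ * u) = p u) (hSw : w⁻¹ • S = S) :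
    ∀ u : G,
      p u * (∫ v in S, ψ (v⁻¹ * u) * f (w⁻¹ * v) ∂μ)
        = p (w⁻¹ * u) * ∫ v in S, ψ (v⁻¹ * (w⁻¹ * u)) * f v ∂μ := by
  intro u
  rw [hp u]
  exact congrArg (p u * ·) (partialConv_comp_mul_left μ hSw ψ f u)

/-- For the `p`-weighted partial group convolution
`Φ(f)(u) = p(u)·∫_S ψ(v⁻¹u) f(v) dμ(v)` (the paper's Eq. 7), if the density `p`
is invariant under left translation by `w` (`p(w⁻¹u) = p(u)` for all `u`) and the
input subset satisfies `w⁻¹ • S = S`, then `Φ` is exactly `w`-equivariant: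
`Φ(L_w f)(u) = Φ(f)(w⁻¹u) = L_w(Φ f)(u)` for all `u`. In particular, if `p` is
constant on `G` and `S = G`, the operation is fully `G`-equivariant. -/
theorem weighted_partial_group_convolution_equivariant
    {G : Type*} [Group G] [TopologicalSpace G] [IsTopologicalGroup G]
    [LocallyCompactSpace G] [T2Space G]
    [MeasurableSpace G] [BorelSpace G]
    (μ : Measure G) [μ.IsHaarMeasure]
    (S : Set G) (hS : MeasurableSet S)
    (p : G → ℝ) (w : G)
    (ψ f : G → ℝ) (hψ : Measurable ψ) (hf : Measurable f)
    (hint : ∀ u : G, Integrable (S.indicator (fun v => ψ (v⁻¹ * u) * f v)) μ)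
    (hp : ∀ u : G, p (w⁻¹ * u) = p u) (hSw : w⁻¹ • S = S) :
    ∀ u : G,
      p u * (∫ v in S, ψ (v⁻¹ * u) * f (w⁻¹ * v) ∂μ)
        = p (w⁻¹ * u) * ∫ v in S, ψ (v⁻¹ * (w⁻¹ * u)) * f v ∂μ :=
  weighted_partial_group_convolution_equivariant_general μ S p w ψ f hp hSw
end

section
/- Let G be a compact Hausdorff topological group with its Haar probability measure μ, let ψ, f : G → ℝ be measurable, let n be a positive natural number, and let u, w ∈ G. Then the Monte Carlo approximation of the group convolution is equivariant in distribution when the sample points are drawn i.i.d. from μ: the pushforward of the product measure μ^n on G^n under the map (v_1, …, v_n) ↦ (1/n)·Σ_{j=1}^n ψ(v_j⁻¹ u)·f(w⁻¹ v_j) equals the pushforward of μ^n under the map (v_1, …, v_n) ↦ (1/n)·Σ_{j=1}^n ψ(v_j⁻¹ (w⁻¹u))·f(v_j). That is, (ψ *̂ L_w f)(u) and (ψ *̂ f)(w⁻¹u) have the same distribution. -/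
open MeasureTheory

/-!
Translating every sample point on the left by `w⁻¹` turns `(ψ *̂ L_w f)(u)` into
`(ψ *̂ f)(w⁻¹u)`, since `(w⁻¹ v)⁻¹ (w⁻¹ u) = v⁻¹ u`. That translation is a measurable
bijection of `Gⁿ` preserving `μⁿ` by left invariance of the Haar measure, so the two
estimators have the same law.
-/

namespace MeasureTheory

variable {α β γ : Type*} [MeasurableSpace α] [MeasurableSpace β] [MeasurableSpace γ]

theorem Measure.map_map_measurableEquiv (μ : Measure α) (e : α ≃ᵐ β) (g : β → γ) :
    (μ.map e).map g = μ.map (g ∘ e) := by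
  by_cases hg : AEMeasurable g (μ.map e)
  · exact hg.map_map_of_aemeasurable e.measurable.aemeasurable
  · have hge : ¬AEMeasurable (g ∘ e) μ := (aemeasurable_map_equiv_iff e).not.mp hg
    rw [Measure.map_of_not_aemeasurable hg, Measure.map_of_not_aemeasurable hge]

theorem MeasurePreserving.map_comp_measurableEquiv {μ : Measure α} {ν : Measure β}
    {e : α ≃ᵐ β} (he : MeasurePreserving e μ ν) (g : β → γ) :
    μ.map (g ∘ e) = ν.map g := by
  rw [← Measure.map_map_measurableEquiv, he.map_eq]

end MeasureTheory

section MonteCarloConvolution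

variable {G : Type*} [Group G]

def leftTranslate {β : Type*} (w : G) (f : G → β) : G → β := fun x => f (w⁻¹ * x)

noncomputable def monteCarloConv {n : ℕ} (ψ f : G → ℝ) (v : Fin n → G) (u : G) : ℝ :=
  (1 / (n : ℝ)) * ∑ j, ψ ((v j)⁻¹ * u) * f (v j)

theorem monteCarloConv_leftTranslate {n : ℕ} (ψ f : G → ℝ) (v : Fin n → G) (u w : G) :
    monteCarloConv ψ (leftTranslate w f) v u =
      monteCarloConv ψ f (fun j => w⁻¹ * v j) (w⁻¹ * u) := by
  simp only [monteCarloConv, leftTranslate, mul_inv_rev, inv_inv, mul_assoc, mul_inv_cancel_left]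

theorem measurePreserving_piCongrRight_mulLeft [MeasurableSpace G] [MeasurableMul G]
    {ι : Type*} [Fintype ι] (μ : Measure G) [μ.IsMulLeftInvariant] [SigmaFinite μ] (w : G) :
    MeasurePreserving (MeasurableEquiv.piCongrRight fun _ : ι => MeasurableEquiv.mulLeft w)
      (Measure.pi fun _ => μ) (Measure.pi fun _ => μ) :=
  measurePreserving_pi _ _ fun _ => measurePreserving_mul_left μ w

end MonteCarloConvolution

theorem monte_carlo_group_convolution_equivariant_in_distribution_general
    {G : Type*} [Group G] [TopologicalSpace G] [IsTopologicalGroup G]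
    [MeasurableSpace G] [BorelSpace G]
    (μ : Measure G) [μ.IsHaarMeasure] [IsProbabilityMeasure μ]
    (ψ f : G → ℝ)
    (n : ℕ) (u w : G) :
    Measure.map
        (fun v : Fin n → G => (1 / (n : ℝ)) * ∑ j, ψ ((v j)⁻¹ * u) * f (w⁻¹ * v j))
        (Measure.pi fun _ : Fin n => μ)
      = Measure.map
          (fun v : Fin n → G => (1 / (n : ℝ)) * ∑ j, ψ ((v j)⁻¹ * (w⁻¹ * u)) * f (v j))
          (Measure.pi fun _ : Fin n => μ) := by
  change Measure.map (fun v => monteCarloConv ψ (leftTranslate w f) v u) _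
    = Measure.map (fun v => monteCarloConv ψ f v (w⁻¹ * u)) _
  simp_rw [monteCarloConv_leftTranslate]
  exact (measurePreserving_piCongrRight_mulLeft μ w⁻¹).map_comp_measurableEquiv
    fun v => monteCarloConv ψ f v (w⁻¹ * u)

/-- The Monte Carlo approximation of the group convolution on a compact Hausdorff
topological group with its Haar probability measure is equivariant in
distribution: with sample points drawn i.i.d. from the Haar measure,
`(ψ *̂ L_w f)(u)` and `(ψ *̂ f)(w⁻¹u)` have the same distribution, i.e. the
pushforwards of the product measure `μ^n` under the two Monte Carlo sums agree. -/
theorem monte_carlo_group_convolution_equivariant_in_distribution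
    {G : Type*} [Group G] [TopologicalSpace G] [IsTopologicalGroup G]
    [CompactSpace G] [T2Space G]
    [MeasurableSpace G] [BorelSpace G]
    (μ : Measure G) [μ.IsHaarMeasure] [IsProbabilityMeasure μ]
    (ψ f : G → ℝ) (hψ : Measurable ψ) (hf : Measurable f)
    (n : ℕ) (hn : 0 < n) (u w : G) :
    Measure.map
        (fun v : Fin n → G => (1 / (n : ℝ)) * ∑ j, ψ ((v j)⁻¹ * u) * f (w⁻¹ * v j))
        (Measure.pi fun _ : Fin n => μ)
      = Measure.map
          (fun v : Fin n → G => (1 / (n : ℝ)) * ∑ j, ψ ((v j)⁻¹ * (w⁻¹ * u)) * f (v j))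
          (Measure.pi fun _ : Fin n => μ) :=
  monte_carlo_group_convolution_equivariant_in_distribution_general μ ψ f n u w
end
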